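/- Let f : U → ℂⁿ be holomorphic on an open neighbourhood U ⊆ ℂⁿ = ℂᵐ × ℂᵈ of a point (a, 0), of the form f(z′, z″) = (z′ + Σ_{j=1}^{d} z″_j G′_j(z), Σ_{j=1}^{d} z″_j G″_j(z)) with G′_j : U → ℂᵐ and G″_j : U → ℂᵈ holomorphic. If the d × d matrix G″(z′, 0) = (G″_1(z′,0), …, G″_d(z′,0)) is invertible at (a, 0), then the complex derivative Df(a, 0) is invertible; in particular f is a local biholomorphism near (a,0). -/

import Mathlib

/-!
Near `(a, 0)` the map `f` agrees with `z ↦ (z′ + Σ z″_j G′_j(z), Σ z″_j G″_j(z))`. Holomorphic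
maps are locally Lipschitz (Schwarz lemma plus the mean value inequality), and a product
`c(z) • G(z)` with `c` linear, `c(a, 0) = 0` and `G` locally Lipschitz is strictly differentiable
at `(a, 0)` with derivative `v ↦ c(v) • G(a, 0)`. Hence `f` is strictly differentiable at `(a, 0)`
with the block triangular derivative `(v′, v″) ↦ (v′ + G′(a, 0) v″, G″(a, 0) v″)`, which is
invertible, and the inverse function theorem gives local injectivity.
-/

open Metric Filter Topology Asymptotics Function

theorem Function.Bijective.prodTriangular {α β γ : Type*} [AddGroup α] {B : β → γ}
    (hB : Bijective B) (A : β → α) : Bijective fun v : α × β => (v.1 + A v.2, B v.2) := by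
  refine ⟨fun u v huv => ?_, fun y => ?_⟩
  · obtain ⟨h₁, h₂⟩ := Prod.mk.inj huv
    have h₂' : u.2 = v.2 := hB.1 h₂
    rw [h₂', add_left_inj] at h₁
    exact Prod.ext h₁ h₂'
  · obtain ⟨w, hw⟩ := hB.2 y.2
    exact ⟨(y.1 - A w, w), by simp [hw]⟩

theorem DifferentiableOn.locallyLipschitzOn {E F : Type*} [NormedAddCommGroup E]
    [NormedSpace ℂ E] [NormedAddCommGroup F] [NormedSpace ℂ F] {G : E → F} {U : Set E}
    (hG : DifferentiableOn ℂ G U) (hU : IsOpen U) : LocallyLipschitzOn U G := by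
  intro x hx
  obtain ⟨r₀, hr₀, hsub⟩ : ∃ r₀ > 0, ball x r₀ ⊆ U ∩ G ⁻¹' ball (G x) 1 :=
    Metric.mem_nhds_iff.mp (inter_mem (hU.mem_nhds hx)
      ((hG.continuousOn.continuousAt (hU.mem_nhds hx)).preimage_mem_nhds
        (ball_mem_nhds _ one_pos)))
  obtain ⟨r, hr, hr₀r⟩ : ∃ r, 0 < r ∧ 2 * r = r₀ := ⟨r₀ / 2, by positivity, by ring⟩
  have hball : ∀ y ∈ ball x r, ball y r ⊆ ball x r₀ := fun y hy =>
    ball_subset_ball' (by rw [mem_ball] at hy; linarith)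
  have hderiv : ∀ y ∈ ball x r, ‖fderiv ℂ G y‖ ≤ 2 / r := by
    intro y hy
    refine Complex.norm_fderiv_le_div_of_mapsTo_ball
      (hG.mono ((hball y hy).trans fun z hz => (hsub hz).1)) (fun z hz => ?_) hr
    have hz := (hsub (hball y hy hz)).2
    have hy' := (hsub (ball_subset_ball (by linarith) hy)).2
    rw [Set.mem_preimage, mem_ball] at hz hy'
    rw [mem_closedBall]
    linarith [dist_triangle_right (G z) (G y) (G x)]
  refine ⟨(2 / r).toNNReal, ball x r, mem_nhdsWithin_of_mem_nhds (ball_mem_nhds x hr), ?_⟩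
  exact Convex.lipschitzOnWith_of_nnnorm_fderiv_le
    (fun y hy => hG.differentiableAt (hU.mem_nhds (hsub (ball_subset_ball (by linarith) hy)).1))
    (fun y hy => Real.le_toNNReal_iff_coe_le (by positivity) |>.2 (hderiv y hy)) (convex_ball x r)

theorem hasStrictFDerivAt_smul_of_map_eq_zero {𝕜 E F : Type*} [NontriviallyNormedField 𝕜]
    [NormedAddCommGroup E] [NormedSpace 𝕜 E] [NormedAddCommGroup F] [NormedSpace 𝕜 F]
    {c : E →L[𝕜] 𝕜} {G : E → F} {x : E} {U : Set E} (hcx : c x = 0) (hU : U ∈ 𝓝 x)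
    (hG : LocallyLipschitzOn U G) :
    HasStrictFDerivAt (fun z => c z • G z) (c.smulRight (G x)) x := by
  obtain ⟨K, s, hs, hGs⟩ := hG (mem_of_mem_nhds hU)
  rw [nhdsWithin_eq_nhds.2 hU] at hs
  have hsplit : ∀ p : E × E, c p.1 • G p.1 - c p.2 • G p.2 - c.smulRight (G x) (p.1 - p.2)
      = c (p.1 - p.2) • (G p.1 - G x) + c p.2 • (G p.1 - G p.2) := by
    intro p
    simp only [ContinuousLinearMap.smulRight_apply, map_sub, sub_smul, smul_sub]
    abel
  have hfst : Tendsto Prod.fst (𝓝 (x, x)) (𝓝 x) := continuous_fst.tendsto' _ _ rfl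
  have hsnd : Tendsto Prod.snd (𝓝 (x, x)) (𝓝 x) := continuous_snd.tendsto' _ _ rfl
  have hnear : (fun p : E × E => c (p.1 - p.2) • (G p.1 - G x)) =o[𝓝 (x, x)]
      fun p => ‖p.1 - p.2‖ • (1 : ℝ) := by
    refine (c.isBigO_comp _ _).norm_right.smul_isLittleO (isLittleO_one_iff ℝ |>.2 ?_)
    simpa using ((hGs.continuousOn.continuousAt hs).tendsto.comp hfst).sub_const (G x)
  have hfar : (fun p : E × E => c p.2 • (G p.1 - G p.2)) =o[𝓝 (x, x)]
      fun p => (1 : ℝ) • ‖p.1 - p.2‖ := by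
    refine IsLittleO.smul_isBigO (isLittleO_one_iff ℝ |>.2 ?_) (IsBigO.of_bound K ?_)
    · rw [← hcx]
      exact (c.continuous.tendsto x).comp hsnd
    · filter_upwards [hfst.eventually hs, hsnd.eventually hs] with p hp₁ hp₂
      simpa using hGs.norm_sub_le hp₁ hp₂
  simp only [smul_eq_mul, mul_one, one_mul, isLittleO_norm_right] at hnear hfar
  refine .of_isLittleO ?_
  simpa only [hsplit] using hnear.add hfar

theorem HasStrictFDerivAt.exists_mem_nhds_injOn {𝕜 E F : Type*} [NontriviallyNormedField 𝕜]
    [NormedAddCommGroup E] [NormedSpace 𝕜 E] [CompleteSpace E]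
    [NormedAddCommGroup F] [NormedSpace 𝕜 F] [CompleteSpace F]
    {f : E → F} {f' : E →L[𝕜] F} {a : E} (hf : HasStrictFDerivAt f f' a) (hf' : Bijective f') :
    ∃ s ∈ 𝓝 a, Set.InjOn f s := by
  set e := ContinuousLinearEquiv.ofBijective f' (LinearMap.ker_eq_bot.2 hf'.1)
    (LinearMap.range_eq_top.2 hf'.2)
  have he : HasStrictFDerivAt f (e : E →L[𝕜] F) a := by
    rwa [ContinuousLinearEquiv.coe_ofBijective]
  exact ⟨_, (he.toOpenPartialHomeomorph f).open_source.mem_nhds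
    he.mem_toOpenPartialHomeomorph_source, (he.toOpenPartialHomeomorph f).injOn⟩

section NormalForm

variable {𝕜 E F ι : Type*} [NontriviallyNormedField 𝕜] [NormedAddCommGroup E] [NormedSpace 𝕜 E]
  [NormedAddCommGroup F] [NormedSpace 𝕜 F] [Fintype ι]

variable (𝕜) in
noncomputable def normalFormLinear (A : ι → E) (B : ι → F) : E × (ι → 𝕜) →L[𝕜] E × F :=
  let coord (j : ι) := ContinuousLinearMap.proj j ∘L ContinuousLinearMap.snd 𝕜 E (ι → 𝕜)
  (ContinuousLinearMap.fst 𝕜 E (ι → 𝕜) + ∑ j, (coord j).smulRight (A j)).prod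
    (∑ j, (coord j).smulRight (B j))

@[simp]
theorem normalFormLinear_apply (A : ι → E) (B : ι → F) (v : E × (ι → 𝕜)) :
    normalFormLinear 𝕜 A B v = (v.1 + ∑ j, v.2 j • A j, ∑ j, v.2 j • B j) := by
  simp [normalFormLinear]

theorem normalFormLinear_bijective (A : ι → E) {B : ι → F}
    (hB : Bijective fun w : ι → 𝕜 => ∑ j, w j • B j) : Bijective (normalFormLinear 𝕜 A B) := by
  convert hB.prodTriangular (fun w => ∑ j, w j • A j) using 1
  exact funext (normalFormLinear_apply A B)

theorem hasStrictFDerivAt_normalForm {G' : ι → E × (ι → 𝕜) → E} {G'' : ι → E × (ι → 𝕜) → F}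
    {U : Set (E × (ι → 𝕜))} {a : E} (hU : U ∈ 𝓝 (a, 0))
    (hG' : ∀ j, LocallyLipschitzOn U (G' j)) (hG'' : ∀ j, LocallyLipschitzOn U (G'' j)) :
    HasStrictFDerivAt (fun z : E × (ι → 𝕜) => (z.1 + ∑ j, z.2 j • G' j z, ∑ j, z.2 j • G'' j z))
      (normalFormLinear 𝕜 (fun j => G' j (a, 0)) (fun j => G'' j (a, 0))) (a, 0) := by
  have hcoord : ∀ j : ι,
      (ContinuousLinearMap.proj j ∘L ContinuousLinearMap.snd 𝕜 E (ι → 𝕜)) (a, 0) = 0 :=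
    fun _ => rfl
  exact (hasStrictFDerivAt_fst.add (.fun_sum fun j _ =>
    hasStrictFDerivAt_smul_of_map_eq_zero (hcoord j) hU (hG' j))).prodMk
    (.fun_sum fun j _ => hasStrictFDerivAt_smul_of_map_eq_zero (hcoord j) hU (hG'' j))

end NormalForm

theorem normal_form_local_biholomorphism_general {m d : ℕ}
    (U : Set ((Fin m → ℂ) × (Fin d → ℂ))) (hU : IsOpen U)
    (a : Fin m → ℂ) (ha : ((a, (0 : Fin d → ℂ)) : (Fin m → ℂ) × (Fin d → ℂ)) ∈ U)
    (f : (Fin m → ℂ) × (Fin d → ℂ) → (Fin m → ℂ) × (Fin d → ℂ))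
    (G' : Fin d → (Fin m → ℂ) × (Fin d → ℂ) → (Fin m → ℂ))
    (G'' : Fin d → (Fin m → ℂ) × (Fin d → ℂ) → (Fin d → ℂ))
    (hG' : ∀ j, DifferentiableOn ℂ (G' j) U)
    (hG'' : ∀ j, DifferentiableOn ℂ (G'' j) U)
    (hform : ∀ z ∈ U, f z = (z.1 + ∑ j, z.2 j • G' j z, ∑ j, z.2 j • G'' j z))
    (hinv : Function.Bijective (fun w : Fin d → ℂ => ∑ j, w j • G'' j (a, 0))) :
    Function.Bijective (fderiv ℂ f (a, 0)) ∧
      ∃ s ∈ nhds ((a, (0 : Fin d → ℂ)) : (Fin m → ℂ) × (Fin d → ℂ)), Set.InjOn f s := by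
  have hf : HasStrictFDerivAt f
      (normalFormLinear ℂ (fun j => G' j (a, 0)) (fun j => G'' j (a, 0))) (a, 0) :=
    (hasStrictFDerivAt_normalForm (hU.mem_nhds ha) (fun j => (hG' j).locallyLipschitzOn hU)
      (fun j => (hG'' j).locallyLipschitzOn hU)).congr_of_eventuallyEq
      (eventuallyEq_of_mem (hU.mem_nhds ha) fun z hz => hform z hz).symm
  have hbij := normalFormLinear_bijective (fun j => G' j (a, 0)) hinv
  exact ⟨hf.hasFDerivAt.fderiv ▸ hbij, hf.exists_mem_nhds_injOn hbij⟩

/-- for a holomorphic map of the normal form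
`f (z′, z″) = (z′ + Σ_j z″_j G′_j (z), Σ_j z″_j G″_j (z))` on a neighbourhood of a
point `(a, 0) ∈ ℂᵐ × ℂᵈ`, if the `d × d` matrix `G″(a, 0)` is invertible (i.e. the
linear map `w ↦ Σ_j w_j G″_j (a, 0)` is bijective), then the complex derivative
`Df (a, 0)` is invertible; in particular `f` is injective near `(a, 0)`. -/
theorem normal_form_local_biholomorphism {m d : ℕ}
    (U : Set ((Fin m → ℂ) × (Fin d → ℂ))) (hU : IsOpen U)
    (a : Fin m → ℂ) (ha : ((a, (0 : Fin d → ℂ)) : (Fin m → ℂ) × (Fin d → ℂ)) ∈ U)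
    (f : (Fin m → ℂ) × (Fin d → ℂ) → (Fin m → ℂ) × (Fin d → ℂ))
    (G' : Fin d → (Fin m → ℂ) × (Fin d → ℂ) → (Fin m → ℂ))
    (G'' : Fin d → (Fin m → ℂ) × (Fin d → ℂ) → (Fin d → ℂ))
    (hf : DifferentiableOn ℂ f U)
    (hG' : ∀ j, DifferentiableOn ℂ (G' j) U)
    (hG'' : ∀ j, DifferentiableOn ℂ (G'' j) U)
    (hform : ∀ z ∈ U, f z = (z.1 + ∑ j, z.2 j • G' j z, ∑ j, z.2 j • G'' j z))
    (hinv : Function.Bijective (fun w : Fin d → ℂ => ∑ j, w j • G'' j (a, 0))) :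
    Function.Bijective (fderiv ℂ f (a, 0)) ∧
      ∃ s ∈ nhds ((a, (0 : Fin d → ℂ)) : (Fin m → ℂ) × (Fin d → ℂ)), Set.InjOn f s :=
  normal_form_local_biholomorphism_general U hU a ha f G' G'' hG' hG'' hform hinv
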